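/- arXiv:math/0612453 — 5 statements merged into one kernel-verified Lean document; each statement's English description precedes it below -/
import Mathlib

section
/- Let m ≥ 0. The linear map K^{m+1} → K^{m+2} given by the matrix Z^{m+1}_{m+2} is injective, and its image equals the hyperplane { s ∈ K^{m+2} : s_1 = Σ_{i=2}^{m+2} ε_i s_i }, where ε_i = +1 if i ≡ 2 or 3 (mod 4) and ε_i = −1 if i ≡ 0 or 1 (mod 4). In particular this image is an (m+1)-dimensional subspace of K^{m+2}. -/
/-!
The rows `i ≥ 1` of `Z r = 0` say `r_{i-1} = -r_{i+1}`; since `r` vanishes beyond its last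
index, descending induction gives `r = 0`. The vector `w = (0, ε_2, …, ε_{m+2})` satisfies
`wᵀ Z = Z_1` (the first row), because column `c ≥ 2` of `Z` meets `w` in `ε_{c+2} + ε_c = 0`;
so the image lies in the hyperplane `s_1 = w ⬝ s`. This hyperplane is proper and the image
already has dimension `m + 1`, hence they coincide.
-/

/-- The matrix `Z^{m+1}_{m+2}` (the `m`-th enlargement of the column `[1;1]`),
determined by `(Zr)_1 = r_1 + r_2` and `(Zr)_i = r_{i-1} + r_{i+1}` for `2 ≤ i ≤ m+2`
(1-based indices, with `r_j = 0` for `j > m+1`). Here indices are 0-based. -/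
def Zmat2 (K : Type*) [Field K] (m : ℕ) : Matrix (Fin (m + 2)) (Fin (m + 1)) K :=
  Matrix.of fun r c =>
    if (r : ℕ) = 0 then (if (c : ℕ) = 0 ∨ (c : ℕ) = 1 then 1 else 0)
    else (if (c : ℕ) + 1 = (r : ℕ) ∨ (c : ℕ) = (r : ℕ) + 1 then 1 else 0)

/-- `ε_i = +1` if `i ≡ 2, 3 (mod 4)` and `ε_i = -1` if `i ≡ 0, 1 (mod 4)`. -/
def eps4 (K : Type*) [Field K] (i : ℕ) : K :=
  if i % 4 = 2 ∨ i % 4 = 3 then 1 else -1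

open Matrix

lemma eps4_add_two {K : Type*} [Field K] (n : ℕ) : eps4 K (n + 2) = -eps4 K n := by
  unfold eps4
  by_cases h : n % 4 = 2 ∨ n % 4 = 3
  · rw [if_pos h, if_neg (by omega)]
  · rw [if_neg h, if_pos (by omega), neg_neg]

lemma Submodule.eq_of_le_of_ne_top_of_finrank_add_one {K V : Type*} [DivisionRing K]
    [AddCommGroup V] [Module K V] [FiniteDimensional K V] {S H : Submodule K V}
    (hle : S ≤ H) (hH : H ≠ ⊤) (hS : Module.finrank K S + 1 = Module.finrank K V) : S = H :=
  eq_of_le_of_finrank_le hle (by have := finrank_lt hH; omega)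

section extendByZero

variable {M : Type*} [Zero M] {n : ℕ}

def extendByZero (r : Fin n → M) (j : ℕ) : M := if h : j < n then r ⟨j, h⟩ else 0

@[simp]
lemma extendByZero_val (r : Fin n → M) (i : Fin n) : extendByZero r i = r i := by
  simp [extendByZero]

lemma extendByZero_of_lt (r : Fin n → M) {j : ℕ} (h : j < n) :
    extendByZero r j = r ⟨j, h⟩ := by
  simp [extendByZero, h]

lemma extendByZero_of_le (r : Fin n → M) {j : ℕ} (h : n ≤ j) : extendByZero r j = 0 := by
  simp [extendByZero, not_lt.mpr h]

end extendByZero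

lemma sum_ite_val_eq_extendByZero {M : Type*} [AddCommMonoid M] {n : ℕ} (r : Fin n → M)
    (k : ℕ) :
    ∑ i : Fin n, (if (i : ℕ) = k then r i else 0) = extendByZero r k := by
  by_cases hk : k < n
  · rw [Finset.sum_eq_single_of_mem ⟨k, hk⟩ (Finset.mem_univ _)
      fun i _ hi => if_neg fun h => hi (Fin.ext h)]
    simp [extendByZero, hk]
  · rw [extendByZero_of_le r (not_lt.mp hk)]
    exact Finset.sum_eq_zero fun i _ => if_neg (by omega)

lemma sum_ite_val_add_eq {M : Type*} [AddCommMonoid M] {n : ℕ} (r : Fin n → M) (d k : ℕ) :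
    ∑ i : Fin n, (if (i : ℕ) + d = k then r i else 0) =
      if d ≤ k then extendByZero r (k - d) else 0 := by
  split_ifs with hdk
  · rw [← sum_ite_val_eq_extendByZero]
    exact Finset.sum_congr rfl fun i _ => if_congr (by omega) rfl rfl
  · exact Finset.sum_eq_zero fun i _ => if_neg (by omega)

namespace Zmat2

variable {K : Type*} [Field K] {m : ℕ}

lemma mulVec_succ (r : Fin (m + 1) → K) (i : Fin (m + 1)) :
    (Zmat2 K m *ᵥ r) i.succ = extendByZero r i + extendByZero r (i + 2) := by
  have hterm : ∀ c : Fin (m + 1), Zmat2 K m i.succ c * r c =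
      (if (c : ℕ) = i then r c else 0) + (if (c : ℕ) = i + 2 then r c else 0) := by
    intro c
    simp only [Zmat2, of_apply, Fin.val_succ, Nat.add_one_ne_zero, if_false]
    split_ifs <;> first | (exfalso; omega) | simp
  simp only [mulVec, dotProduct, hterm, Finset.sum_add_distrib, sum_ite_val_eq_extendByZero]

lemma extendByZero_eq_zero_of_mulVec_eq_zero {r : Fin (m + 1) → K} (hr : Zmat2 K m *ᵥ r = 0)
    (j : ℕ) : extendByZero r j = 0 := by
  have hstep : ∀ j, extendByZero r j = -extendByZero r (j + 2) := by
    intro j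
    by_cases hj : j < m + 1
    · have := mulVec_succ r ⟨j, hj⟩
      rw [hr] at this
      exact eq_neg_of_add_eq_zero_left this.symm
    · rw [extendByZero_of_le r (not_lt.mp hj), extendByZero_of_le r (by omega), neg_zero]
  have hvanish : ∀ k j, m + 1 ≤ j + k → extendByZero r j = 0 := by
    intro k
    induction k with
    | zero => exact fun j hj => extendByZero_of_le r hj
    | succ k ih => exact fun j hj => by rw [hstep, ih (j + 2) (by omega), neg_zero]
  exact hvanish (m + 1) j (by omega)

theorem injective_mulVecLin : Function.Injective (Zmat2 K m).mulVecLin := by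
  rw [← LinearMap.ker_eq_bot, LinearMap.ker_eq_bot']
  intro r hr
  funext c
  simpa using extendByZero_eq_zero_of_mulVec_eq_zero hr c

-- `eps4` is indexed from 1, the coordinates of `Fin (m + 2) → K` from 0.
def epsVec (K : Type*) [Field K] (m : ℕ) : Fin (m + 2) → K :=
  fun i => if (i : ℕ) = 0 then 0 else eps4 K ((i : ℕ) + 1)

lemma epsVec_vecMul : epsVec K m ᵥ* Zmat2 K m = Zmat2 K m 0 := by
  ext c
  have hterm : ∀ i : Fin (m + 1), epsVec K m i.succ * Zmat2 K m i.succ c =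
      (if (i : ℕ) = c then eps4 K (i + 2) else 0) +
        (if (i : ℕ) + 2 = c then eps4 K (i + 2) else 0) := by
    intro i
    simp only [epsVec, Zmat2, of_apply, Fin.val_succ, Nat.add_one_ne_zero, if_false]
    split_ifs <;> first | (exfalso; omega) | simp
  rw [vecMul, dotProduct, Fin.sum_univ_succ]
  simp only [hterm, Finset.sum_add_distrib]
  rw [sum_ite_val_eq_extendByZero (fun i : Fin (m + 1) => eps4 K (i + 2)),
    sum_ite_val_add_eq (fun i : Fin (m + 1) => eps4 K (i + 2)),
    show epsVec K m 0 = 0 from if_pos rfl, zero_mul, zero_add, extendByZero_val]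
  simp only [Zmat2, of_apply, Fin.val_zero, if_true]
  by_cases hc : 2 ≤ (c : ℕ)
  · rw [if_pos hc, extendByZero_of_lt _ (by omega), if_neg (by omega)]
    dsimp only
    rw [Nat.sub_add_cancel hc, eps4_add_two, neg_add_cancel]
  · rw [if_neg hc, add_zero, if_pos (by omega)]
    interval_cases (c : ℕ) <;> simp [eps4]

def epsHyperplane (K : Type*) [Field K] (m : ℕ) : Submodule K (Fin (m + 2) → K) :=
  LinearMap.eqLocus (LinearMap.proj 0) (dotProductEquiv K (Fin (m + 2)) (epsVec K m))

lemma mem_epsHyperplane {s : Fin (m + 2) → K} :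
    s ∈ epsHyperplane K m ↔ s 0 = epsVec K m ⬝ᵥ s :=
  LinearMap.mem_eqLocus

lemma epsHyperplane_ne_top : epsHyperplane K m ≠ ⊤ := by
  intro h
  have := mem_epsHyperplane.mp (h ▸ Submodule.mem_top : Pi.single 0 1 ∈ epsHyperplane K m)
  simp [epsVec] at this

lemma range_mulVecLin_le : LinearMap.range (Zmat2 K m).mulVecLin ≤ epsHyperplane K m := by
  rintro _ ⟨r, rfl⟩
  rw [mem_epsHyperplane, mulVecLin_apply, dotProduct_mulVec, epsVec_vecMul]
  rfl

lemma finrank_range_mulVecLin :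
    Module.finrank K (LinearMap.range (Zmat2 K m).mulVecLin) = m + 1 := by
  rw [LinearMap.finrank_range_of_inj injective_mulVecLin, Module.finrank_fin_fun]

lemma range_mulVecLin : LinearMap.range (Zmat2 K m).mulVecLin = epsHyperplane K m :=
  Submodule.eq_of_le_of_ne_top_of_finrank_add_one range_mulVecLin_le epsHyperplane_ne_top
    (by rw [finrank_range_mulVecLin, Module.finrank_fin_fun])

end Zmat2

theorem stmt1 (K : Type*) [Field K] (m : ℕ) :
    Function.Injective (Zmat2 K m).mulVecLin ∧
    (∀ s : Fin (m + 2) → K,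
      s ∈ LinearMap.range (Zmat2 K m).mulVecLin ↔
        s 0 = ∑ i : Fin (m + 2), (if (i : ℕ) = 0 then 0 else eps4 K ((i : ℕ) + 1)) * s i) ∧
    Module.finrank K (LinearMap.range (Zmat2 K m).mulVecLin) = m + 1 := by
  refine ⟨Zmat2.injective_mulVecLin, fun s => ?_, Zmat2.finrank_range_mulVecLin⟩
  rw [Zmat2.range_mulVecLin, Zmat2.mem_epsHyperplane]
  rfl
end

section
/- Let m ≥ 0. The set of vectors S ∈ K^{m+2} such that there exist Q, R ∈ K^{m+1} with S = Y^{m+1}_{m+2} Q and S = Z^{m+1}_{m+2} R equals { s ∈ K^{m+2} : s_1 = 0 and Σ_{i=2}^{m+2} ε_i s_i = 0 }, where ε_i = +1 if i ≡ 2 or 3 (mod 4) and ε_i = −1 if i ≡ 0 or 1 (mod 4). In particular this set is an m-dimensional subspace of K^{m+2}. -/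
/-- `Y^n_{n+i}`: the `(n+i) × n` matrix whose top `i` rows are zero and whose bottom
`n` rows form the identity. -/
def Ymat (K : Type*) [Field K] (n i : ℕ) : Matrix (Fin (n + i)) (Fin n) K :=
  Matrix.of fun r c => if (r : ℕ) = (c : ℕ) + i then 1 else 0

/-- `S = Y^{m+1}_{m+2} Q = Z^{m+1}_{m+2} R` for some `Q, R ∈ K^{m+1}`. -/
def cond3 (K : Type*) [Field K] (m : ℕ) (s : Fin (m + 2) → K) : Prop :=
  ∃ Q R : Fin (m + 1) → K,
    s = (Ymat K (m + 1) 1).mulVec Q ∧ s = (Zmat2 K m).mulVec R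

section Helpers

variable {K : Type*} [Field K]

/-- Sum of an indicator over `Fin n`. -/
lemma sum_if_nat {n : ℕ} (f : Fin n → K) (a : ℕ) :
    ∑ c : Fin n, (if (c : ℕ) = a then f c else 0) =
      if h : a < n then f ⟨a, h⟩ else 0 := by
  split_ifs with h
  · rw [Finset.sum_eq_single ⟨a, h⟩]
    · simp
    · intro b _ hb
      rw [if_neg]
      simpa [Fin.ext_iff] using hb
    · simp
  · apply Finset.sum_eq_zero
    intro c _
    rw [if_neg]
    have := c.isLt
    omega

/-- Coefficient of `s_i` in the solution `R_c`. -/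
def coefc (K : Type*) [Field K] (c i : ℕ) : K :=
  if c + 1 ≤ i ∧ (i - c - 1) % 2 = 0 then (-1) ^ ((i - c - 1) / 2) else 0

lemma coefc_add (c i : ℕ) :
    coefc K c i + coefc K (c + 2) i = if i = c + 1 then 1 else 0 := by
  unfold coefc
  by_cases h1 : i = c + 1
  · subst h1
    rw [if_pos ⟨by omega, by omega⟩, if_neg (by omega), if_pos rfl]
    have : c + 1 - c - 1 = 0 := by omega
    rw [this]
    norm_num
  · rw [if_neg h1]
    by_cases h2 : c + 1 ≤ i ∧ (i - c - 1) % 2 = 0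
    · have h3 : c + 3 ≤ i := by omega
      rw [if_pos h2, if_pos ⟨h3, by omega⟩]
      have he2 : (i - c - 1) / 2 = (i - (c + 2) - 1) / 2 + 1 := by omega
      rw [he2, pow_succ]
      ring
    · rw [if_neg h2, if_neg (by omega)]
      ring

lemma neg_one_pow_two_mul (k : ℕ) : ((-1 : K)) ^ (2 * k) = 1 := by
  rw [pow_mul]; norm_num

lemma coefc_mu (i : ℕ) :
    coefc K 0 i + coefc K 1 i = if i = 0 then 0 else eps4 K (i + 1) := by
  unfold coefc eps4
  obtain ⟨k, r, hr, hik⟩ : ∃ k r, r < 4 ∧ i = 4 * k + r :=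
    ⟨i / 4, i % 4, Nat.mod_lt _ (by omega), by omega⟩
  subst hik
  interval_cases r
  · by_cases hk : k = 0
    · subst hk; norm_num
    · rw [if_neg (by omega), if_pos ⟨by omega, by omega⟩, if_neg (by omega), if_neg (by omega)]
      have : (4 * k + 0 - 1 - 1) / 2 = 2 * (k - 1) + 1 := by omega
      rw [this, pow_succ, neg_one_pow_two_mul]
      ring
  · rw [if_pos ⟨by omega, by omega⟩, if_neg (by omega), if_neg (by omega), if_pos (by omega)]
    have : (4 * k + 1 - 0 - 1) / 2 = 2 * k := by omega
    rw [this, neg_one_pow_two_mul]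
    ring
  · rw [if_neg (by omega), if_pos ⟨by omega, by omega⟩, if_neg (by omega), if_pos (by omega)]
    have : (4 * k + 2 - 1 - 1) / 2 = 2 * k := by omega
    rw [this, neg_one_pow_two_mul]
    ring
  · rw [if_pos ⟨by omega, by omega⟩, if_neg (by omega), if_neg (by omega), if_neg (by omega)]
    have : (4 * k + 3 - 0 - 1) / 2 = 2 * k + 1 := by omega
    rw [this, pow_succ, neg_one_pow_two_mul]
    ring

lemma eps4_flip (a : ℕ) : eps4 K a + eps4 K (a + 2) = 0 := by
  unfold eps4
  by_cases h : a % 4 = 2 ∨ a % 4 = 3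
  · rw [if_pos h, if_neg (by omega)]; ring
  · rw [if_neg h, if_pos (by omega)]; ring

/-- The row vector annihilating the columns of `Z`. -/
def lamv (K : Type*) [Field K] (j : ℕ) : K := -(eps4 K (j + 3))

lemma lam_pair (c : ℕ) : lamv K (c + 1) + lamv K (c - 1) = 0 := by
  unfold lamv
  by_cases hc : c = 0
  · subst hc
    unfold eps4
    norm_num
  · have h1 : c - 1 + 3 = c + 2 := by omega
    rw [h1]
    have h2 := eps4_flip (K := K) (c + 2)
    have h3 : c + 2 + 2 = c + 1 + 3 := by omega
    rw [h3] at h2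
    linear_combination -h2

lemma lam_eq (i : ℕ) (h : i ≠ 0) : eps4 K (i + 1) = lamv K i := by
  unfold lamv
  have h2 := eps4_flip (K := K) (i + 1)
  have h3 : i + 1 + 2 = i + 3 := by omega
  rw [h3] at h2
  linear_combination h2

lemma Zmat2_eq {m : ℕ} (r : Fin (m + 2)) (c : Fin (m + 1)) :
    Zmat2 K m r c =
      (if (c : ℕ) = (r : ℕ) + 1 then 1 else 0) +
      (if (c : ℕ) = (r : ℕ) - 1 then 1 else 0) := by
  unfold Zmat2
  simp only [Matrix.of_apply]
  split_ifs
  all_goals (try norm_num)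
  all_goals (exfalso; omega)

lemma Zmat2_eq' {m : ℕ} (r : Fin (m + 2)) (c : Fin (m + 1)) :
    Zmat2 K m r c =
      (if (r : ℕ) = (c : ℕ) + 1 then 1 else 0) +
      (if (r : ℕ) = (c : ℕ) - 1 then 1 else 0) := by
  unfold Zmat2
  simp only [Matrix.of_apply]
  split_ifs
  all_goals (try norm_num)
  all_goals (exfalso; omega)

lemma Z_mulVec {m : ℕ} (R : Fin (m + 1) → K) (r : Fin (m + 2)) :
    (Zmat2 K m).mulVec R r =
      (if h : (r : ℕ) + 1 < m + 1 then R ⟨(r : ℕ) + 1, h⟩ else 0) +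
        R ⟨(r : ℕ) - 1, by omega⟩ := by
  unfold Matrix.mulVec dotProduct
  simp only [Zmat2_eq, add_mul, ite_mul, one_mul, zero_mul]
  rw [Finset.sum_add_distrib, sum_if_nat R ((r : ℕ) + 1), sum_if_nat R ((r : ℕ) - 1),
    dif_pos (show (r : ℕ) - 1 < m + 1 by omega)]

lemma Y_mulVec {m : ℕ} (Q : Fin (m + 1) → K) (r : Fin (m + 2)) :
    (Ymat K (m + 1) 1).mulVec Q r =
      if h : (r : ℕ) ≠ 0 then Q ⟨(r : ℕ) - 1, by omega⟩ else 0 := by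
  unfold Matrix.mulVec dotProduct
  by_cases hr : (r : ℕ) = 0
  · rw [dif_neg (by omega)]
    apply Finset.sum_eq_zero
    intro c _
    unfold Ymat
    simp only [Matrix.of_apply]
    rw [if_neg (by omega), zero_mul]
  · rw [dif_pos hr]
    have h1 : ∀ c : Fin (m + 1), Ymat K (m + 1) 1 r c * Q c
        = if (c : ℕ) = (r : ℕ) - 1 then Q c else 0 := by
      intro c
      unfold Ymat
      simp only [Matrix.of_apply, ite_mul, one_mul, zero_mul]
      congr 1
      simp only [eq_iff_iff]
      omega
    simp only [h1]
    rw [sum_if_nat Q ((r : ℕ) - 1), dif_pos (show (r : ℕ) - 1 < m + 1 by omega)]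

/-- The explicit solution vector, extended to all of `ℕ`. -/
def Rext {m : ℕ} (s : Fin (m + 2) → K) (a : ℕ) : K :=
  ∑ i : Fin (m + 2), coefc K a i * s i

lemma Rext_zero {m : ℕ} (s : Fin (m + 2) → K) (a : ℕ) (h : m + 1 ≤ a) :
    Rext s a = 0 := by
  apply Finset.sum_eq_zero
  intro i _
  have := i.isLt
  rw [coefc, if_neg (by omega), zero_mul]

lemma Rext_add {m : ℕ} (s : Fin (m + 2) → K) (a : ℕ) :
    Rext s a + Rext s (a + 2) = if h : a + 1 < m + 2 then s ⟨a + 1, h⟩ else 0 := by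
  unfold Rext
  rw [← Finset.sum_add_distrib]
  have h1 : ∀ i : Fin (m + 2), coefc K a i * s i + coefc K (a + 2) i * s i
      = if (i : ℕ) = a + 1 then s i else 0 := by
    intro i
    rw [← add_mul, coefc_add, ite_mul, one_mul, zero_mul]
  simp only [h1]
  exact sum_if_nat s (a + 1)

lemma Rext_mu {m : ℕ} (s : Fin (m + 2) → K) :
    Rext s 0 + Rext s 1 =
      ∑ i : Fin (m + 2), (if (i : ℕ) = 0 then 0 else eps4 K ((i : ℕ) + 1)) * s i := by
  unfold Rext
  rw [← Finset.sum_add_distrib]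
  apply Finset.sum_congr rfl
  intro i _
  rw [← add_mul, coefc_mu]

end Helpers

theorem stmt3 (K : Type*) [Field K] (m : ℕ) :
    (∀ s : Fin (m + 2) → K,
      cond3 K m s ↔
        (s 0 = 0 ∧
          ∑ i : Fin (m + 2), (if (i : ℕ) = 0 then 0 else eps4 K ((i : ℕ) + 1)) * s i = 0)) ∧
    ∃ W : Submodule K (Fin (m + 2) → K),
      (∀ s, s ∈ W ↔ cond3 K m s) ∧ Module.finrank K W = m := by
  classical
  have main : ∀ s : Fin (m + 2) → K,
      cond3 K m s ↔
        (s 0 = 0 ∧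
          ∑ i : Fin (m + 2), (if (i : ℕ) = 0 then 0 else eps4 K ((i : ℕ) + 1)) * s i = 0) := by
    intro s
    constructor
    · rintro ⟨Q, R, hY, hZ⟩
      have hs0 : s 0 = 0 := by
        rw [hY, Y_mulVec]
        simp
      refine ⟨hs0, ?_⟩
      have hlam : ∑ i : Fin (m + 2),
          (if (i : ℕ) = 0 then 0 else eps4 K ((i : ℕ) + 1)) * s i
          = ∑ i : Fin (m + 2), lamv K (i : ℕ) * s i := by
        apply Finset.sum_congr rfl
        intro i _
        by_cases h : (i : ℕ) = 0
        · have hi : i = 0 := Fin.ext (by simpa using h)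
          rw [hi, hs0, mul_zero, mul_zero]
        · rw [if_neg h, lam_eq _ h]
      rw [hlam, hZ]
      have key : ∀ c : Fin (m + 1),
          ∑ i : Fin (m + 2), lamv K (i : ℕ) * Zmat2 K m i c = 0 := by
        intro c
        have h1 : ∀ i : Fin (m + 2), lamv K (i : ℕ) * Zmat2 K m i c
            = (if (i : ℕ) = (c : ℕ) + 1 then lamv K (i : ℕ) else 0)
              + (if (i : ℕ) = (c : ℕ) - 1 then lamv K (i : ℕ) else 0) := by
          intro i
          rw [Zmat2_eq', mul_add, mul_ite, mul_one, mul_zero, mul_ite, mul_one, mul_zero]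
        simp only [h1]
        rw [Finset.sum_add_distrib,
          sum_if_nat (fun i : Fin (m + 2) => lamv K (i : ℕ)) ((c : ℕ) + 1),
          sum_if_nat (fun i : Fin (m + 2) => lamv K (i : ℕ)) ((c : ℕ) - 1),
          dif_pos (show (c : ℕ) + 1 < m + 2 by omega),
          dif_pos (show (c : ℕ) - 1 < m + 2 by omega)]
        exact lam_pair (c : ℕ)
      unfold Matrix.mulVec dotProduct
      simp only [Finset.mul_sum]
      rw [Finset.sum_comm]
      apply Finset.sum_eq_zero
      intro c _
      have h2 : ∀ i : Fin (m + 2), lamv K (i : ℕ) * (Zmat2 K m i c * R c)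
          = lamv K (i : ℕ) * Zmat2 K m i c * R c := fun i => by ring
      simp only [h2]
      rw [← Finset.sum_mul, key c, zero_mul]
    · rintro ⟨hs0, hsum⟩
      refine ⟨fun c => s ⟨(c : ℕ) + 1, by omega⟩, fun c => Rext s (c : ℕ), ?_, ?_⟩
      · funext r
        rw [Y_mulVec]
        split_ifs with h
        · show s r = s ⟨(r : ℕ) - 1 + 1, by omega⟩
          congr 1
          exact Fin.ext (by simp; omega)
        · have hr : r = 0 := Fin.ext (by simpa using h)
          rw [hr, hs0]
      · funext r
        rw [Z_mulVec]
        have hdite : (if h : (r : ℕ) + 1 < m + 1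
              then (fun c : Fin (m + 1) => Rext s (c : ℕ)) ⟨(r : ℕ) + 1, h⟩ else 0)
            = Rext s ((r : ℕ) + 1) := by
          split_ifs with h
          · rfl
          · exact (Rext_zero s _ (by omega)).symm
        rw [hdite]
        show s r = Rext s ((r : ℕ) + 1) + Rext s ((r : ℕ) - 1)
        by_cases hr : (r : ℕ) = 0
        · have e1 : (r : ℕ) + 1 = 1 := by omega
          have e2 : (r : ℕ) - 1 = 0 := by omega
          rw [e1, e2, add_comm, Rext_mu, hsum]
          have hr0 : r = 0 := Fin.ext (by simpa using hr)
          rw [hr0, hs0]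
        · have ha := Rext_add s ((r : ℕ) - 1)
          rw [dif_pos (show (r : ℕ) - 1 + 1 < m + 2 by omega)] at ha
          have e : (r : ℕ) - 1 + 2 = (r : ℕ) + 1 := by omega
          rw [e] at ha
          have e2 : (⟨(r : ℕ) - 1 + 1, by omega⟩ : Fin (m + 2)) = r :=
            Fin.ext (by simp; omega)
          rw [e2] at ha
          rw [add_comm] at ha
          exact ha.symm
  refine ⟨main, ?_⟩
  set mu : Fin (m + 2) → K :=
    fun i => if (i : ℕ) = 0 then 0 else eps4 K ((i : ℕ) + 1) with hmu
  let g : (Fin (m + 2) → K) →ₗ[K] K := ∑ i, mu i • LinearMap.proj i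
  let f : (Fin (m + 2) → K) →ₗ[K] K × K := (LinearMap.proj 0).prod g
  have hf : ∀ s : Fin (m + 2) → K, f s = (s 0, ∑ i, mu i * s i) := by
    intro s
    simp [f, g, LinearMap.sum_apply, smul_eq_mul]
  refine ⟨LinearMap.ker f, ?_, ?_⟩
  · intro s
    rw [main s, LinearMap.mem_ker, hf, Prod.ext_iff]
    simp [hmu]
  · have hsurj : Function.Surjective f := by
      rintro ⟨a, b⟩
      refine ⟨fun i => if (i : ℕ) = 0 then a else if (i : ℕ) = 1 then b else 0, ?_⟩
      rw [hf]
      have h0 : ((0 : Fin (m + 2)) : ℕ) = 0 := rfl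
      have h1 : ∀ i : Fin (m + 2),
          mu i * (if (i : ℕ) = 0 then a else if (i : ℕ) = 1 then b else 0)
            = if (i : ℕ) = 1 then b else 0 := by
        intro i
        by_cases hi0 : (i : ℕ) = 0
        · simp only [hmu, hi0]
          norm_num
        · by_cases hi1 : (i : ℕ) = 1
          · simp only [hmu, hi0, hi1]
            norm_num [eps4]
          · simp only [hmu, hi0, hi1]
            norm_num
      simp only [h1]
      rw [sum_if_nat (fun _ : Fin (m + 2) => b) 1, dif_pos (show 1 < m + 2 by omega)]
      simp [h0]
    have hrank := LinearMap.finrank_range_add_finrank_ker f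
    rw [LinearMap.range_eq_top.mpr hsurj, finrank_top] at hrank
    rw [Module.finrank_prod, Module.finrank_self, Module.finrank_fin_fun] at hrank
    omega
end

section
/- Let m ≥ 0. For a matrix S ∈ M_{(m+2)×2}(K) the following are equivalent: (i) there exists U ∈ K^m such that S·X^1_2 = X^{m+1}_{m+2} X^m_{m+1} U, S·Y^1_2 = Y^{m+1}_{m+2} Y^m_{m+1} U, and S·Z^1_2 = Z^{m+1}_{m+2} Y^m_{m+1} U; (ii) there exists U = (u_1,…,u_m) ∈ K^m such that S_{i,1} = u_i for 1 ≤ i ≤ m, S_{m+1,1} = S_{m+2,1} = 0, S_{1,2} = S_{2,2} = 0, and S_{i,2} = u_{i−2} for 3 ≤ i ≤ m+2. Consequently the space of such matrices S is an m-dimensional subspace of M_{(m+2)×2}(K). -/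
/-- `X^n_{n+i}`: the `(n+i) × n` matrix whose top `n` rows form the identity and whose
bottom `i` rows are zero. -/
def Xmat (K : Type*) [Field K] (n i : ℕ) : Matrix (Fin (n + i)) (Fin n) K :=
  Matrix.of fun r c => if (r : ℕ) = (c : ℕ) then 1 else 0

/-- Condition (i): `S·X^1_2 = X^{m+1}_{m+2} X^m_{m+1} U`, `S·Y^1_2 = Y^{m+1}_{m+2} Y^m_{m+1} U`
and `S·Z^1_2 = Z^{m+1}_{m+2} Y^m_{m+1} U` for some `U ∈ K^m`. -/
def cond4 (K : Type*) [Field K] (m : ℕ) (S : Matrix (Fin (m + 2)) (Fin 2) K) : Prop :=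
  ∃ U : Fin m → K,
    S.mulVec ![1, 0] = (Xmat K (m + 1) 1).mulVec ((Xmat K m 1).mulVec U) ∧
    S.mulVec ![0, 1] = (Ymat K (m + 1) 1).mulVec ((Ymat K m 1).mulVec U) ∧
    S.mulVec ![1, 1] = (Zmat2 K m).mulVec ((Ymat K m 1).mulVec U)

section Stmt4Aux
variable {K : Type*} [Field K]

private lemma sum_ind (n : ℕ) (W : Fin n → K) (k : ℕ) :
    ∑ c : Fin n, (if (c:ℕ) = k then (1:K) else 0) * W c = if h : k < n then W ⟨k,h⟩ else 0 := by
  split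
  · next h =>
    rw [Finset.sum_eq_single (⟨k, h⟩ : Fin n)]
    · simp
    · intro b _ hb
      simp only [ite_mul, one_mul, zero_mul, ite_eq_right_iff]
      intro hbk; exact absurd (Fin.ext hbk) hb
    · simp
  · next h =>
    apply Finset.sum_eq_zero
    intro c _
    have : (c:ℕ) ≠ k := by omega
    simp [this]

private lemma xmul (n i : ℕ) (W : Fin n → K) (r : Fin (n+i)) :
    (Xmat K n i).mulVec W r = if h : (r:ℕ) < n then W ⟨r, h⟩ else 0 := by
  simp only [Matrix.mulVec, dotProduct, Xmat, Matrix.of_apply]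
  refine Eq.trans (Finset.sum_congr rfl fun c _ => ?_) (sum_ind n W (r:ℕ))
  by_cases h : (c:ℕ) = (r:ℕ)
  · simp [h]
  · rw [if_neg (fun hh => h (Eq.symm hh)), if_neg h]

private lemma ymul (n i : ℕ) (W : Fin n → K) (r : Fin (n+i)) :
    (Ymat K n i).mulVec W r = if h : i ≤ (r:ℕ) then W ⟨(r:ℕ) - i, by omega⟩ else 0 := by
  simp only [Matrix.mulVec, dotProduct, Ymat, Matrix.of_apply]
  split
  · next h =>
    have hlt : (r:ℕ) - i < n := by omega
    have h2 : (∑ c : Fin n, (if (c:ℕ) = (r:ℕ) - i then (1:K) else 0) * W c)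
        = W ⟨(r:ℕ)-i, hlt⟩ := by rw [sum_ind]; exact dif_pos hlt
    refine Eq.trans (Finset.sum_congr rfl fun c _ => ?_) h2
    by_cases hc : (r:ℕ) = (c:ℕ) + i
    · have : (c:ℕ) = (r:ℕ) - i := by omega
      rw [if_pos hc, if_pos this]
    · have : (c:ℕ) ≠ (r:ℕ) - i := by omega
      simp [hc, this]
  · next h =>
    apply Finset.sum_eq_zero
    intro c _
    have : (r:ℕ) ≠ (c:ℕ) + i := by omega
    simp [this]

private lemma zmul (m : ℕ) (W : Fin (m+1) → K) (r : Fin (m+2)) :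
    (Zmat2 K m).mulVec W r =
      W ⟨(r:ℕ) - 1, by omega⟩ + if h : (r:ℕ) + 1 < m + 1 then W ⟨(r:ℕ)+1, h⟩ else 0 := by
  simp only [Matrix.mulVec, dotProduct, Zmat2, Matrix.of_apply]
  have key : ∀ c : Fin (m+1),
      (if (r:ℕ) = 0 then (if (c : ℕ) = 0 ∨ (c : ℕ) = 1 then (1:K) else 0)
       else (if (c : ℕ) + 1 = (r : ℕ) ∨ (c : ℕ) = (r : ℕ) + 1 then 1 else 0)) * W c
      = (if (c:ℕ) = (r:ℕ) - 1 then (1:K) else 0) * W c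
        + (if (c:ℕ) = (r:ℕ) + 1 then (1:K) else 0) * W c := by
    intro c
    rw [← add_mul]
    congr 1
    have hc : (c:ℕ) < m + 1 := c.isLt
    have hr : (r:ℕ) < m + 2 := r.isLt
    split_ifs <;> first | (exfalso; omega) | norm_num
  rw [Finset.sum_congr rfl fun c _ => key c, Finset.sum_add_distrib,
    sum_ind (m+1) W ((r:ℕ) - 1), sum_ind (m+1) W ((r:ℕ) + 1),
    dif_pos (show (r:ℕ) - 1 < m + 1 by omega)]

/-- auxiliary: `gfun U j = U j` for `j < m`, `0` otherwise. -/
def gfun {m : ℕ} (U : Fin m → K) (j : ℕ) : K := if h : j < m then U ⟨j, h⟩ else 0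

lemma gfun_pos {m : ℕ} (U : Fin m → K) {j : ℕ} (h : j < m) : gfun U j = U ⟨j, h⟩ := dif_pos h
lemma gfun_neg {m : ℕ} (U : Fin m → K) {j : ℕ} (h : ¬ j < m) : gfun U j = 0 := dif_neg h

private lemma XXg {m : ℕ} (U : Fin m → K) (r : Fin (m+2)) :
    (Xmat K (m + 1) 1).mulVec ((Xmat K m 1).mulVec U) r = gfun U r := by
  rw [xmul]
  by_cases h : (r:ℕ) < m + 1
  · rw [dif_pos h, xmul]
    by_cases h2 : (r:ℕ) < m
    · rw [gfun_pos U h2]; exact dif_pos h2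
    · rw [gfun_neg U h2]; exact dif_neg h2
  · rw [dif_neg h, gfun_neg U (by omega)]

private lemma YYg {m : ℕ} (U : Fin m → K) (r : Fin (m+2)) :
    (Ymat K (m + 1) 1).mulVec ((Ymat K m 1).mulVec U) r
      = if 2 ≤ (r:ℕ) then gfun U ((r:ℕ) - 2) else 0 := by
  rw [ymul]
  by_cases h : 1 ≤ (r:ℕ)
  · rw [dif_pos h, ymul]
    by_cases h2 : 2 ≤ (r:ℕ)
    · rw [if_pos h2, dif_pos (show 1 ≤ (r:ℕ) - 1 by omega),
        gfun_pos U (show (r:ℕ) - 2 < m by omega)]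
      exact congrArg U (Fin.ext (show (r:ℕ) - 1 - 1 = (r:ℕ) - 2 by omega))
    · rw [if_neg h2, dif_neg (show ¬ 1 ≤ (r:ℕ) - 1 by omega)]
  · rw [dif_neg h, if_neg (by omega)]

private lemma Zg {m : ℕ} (U : Fin m → K) (r : Fin (m+2)) :
    (Zmat2 K m).mulVec ((Ymat K m 1).mulVec U) r
      = (if 2 ≤ (r:ℕ) then gfun U ((r:ℕ) - 2) else 0) + gfun U (r:ℕ) := by
  rw [zmul]
  congr 1
  · rw [ymul]
    by_cases h2 : 2 ≤ (r:ℕ)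
    · rw [if_pos h2, dif_pos (show 1 ≤ (r:ℕ) - 1 by omega),
        gfun_pos U (show (r:ℕ) - 2 < m by omega)]
      exact congrArg U (Fin.ext (show (r:ℕ) - 1 - 1 = (r:ℕ) - 2 by omega))
    · rw [if_neg h2, dif_neg (show ¬ 1 ≤ (r:ℕ) - 1 by omega)]
  · by_cases h : (r:ℕ) + 1 < m + 1
    · rw [dif_pos h, ymul, dif_pos (show 1 ≤ (r:ℕ) + 1 by omega),
        gfun_pos U (show (r:ℕ) < m by omega)]
      exact congrArg U (Fin.ext (show (r:ℕ) + 1 - 1 = (r:ℕ) by omega))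
    · rw [dif_neg h, gfun_neg U (by omega)]

private lemma colX {m : ℕ} (S : Matrix (Fin (m+2)) (Fin 2) K) (r : Fin (m+2)) :
    S.mulVec ![1, 0] r = S r 0 := by
  simp [Matrix.mulVec, dotProduct, Fin.sum_univ_two]

private lemma colY {m : ℕ} (S : Matrix (Fin (m+2)) (Fin 2) K) (r : Fin (m+2)) :
    S.mulVec ![0, 1] r = S r 1 := by
  simp [Matrix.mulVec, dotProduct, Fin.sum_univ_two]

private lemma colZ {m : ℕ} (S : Matrix (Fin (m+2)) (Fin 2) K) (r : Fin (m+2)) :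
    S.mulVec ![1, 1] r = S r 0 + S r 1 := by
  simp [Matrix.mulVec, dotProduct, Fin.sum_univ_two]

/-- Characterization of the three equations in terms of entries. -/
private lemma char1 {m : ℕ} (S : Matrix (Fin (m+2)) (Fin 2) K) (U : Fin m → K) :
    (S.mulVec ![1, 0] = (Xmat K (m + 1) 1).mulVec ((Xmat K m 1).mulVec U) ∧
     S.mulVec ![0, 1] = (Ymat K (m + 1) 1).mulVec ((Ymat K m 1).mulVec U) ∧
     S.mulVec ![1, 1] = (Zmat2 K m).mulVec ((Ymat K m 1).mulVec U)) ↔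
    ((∀ r : Fin (m+2), S r 0 = gfun U (r:ℕ)) ∧
     (∀ r : Fin (m+2), S r 1 = if 2 ≤ (r:ℕ) then gfun U ((r:ℕ) - 2) else 0)) := by
  constructor
  · rintro ⟨e1, e2, -⟩
    constructor
    · intro r
      have := congrFun e1 r
      rwa [colX, XXg] at this
    · intro r
      have := congrFun e2 r
      rwa [colY, YYg] at this
  · rintro ⟨h0, h1⟩
    refine ⟨funext fun r => ?_, funext fun r => ?_, funext fun r => ?_⟩
    · rw [colX, XXg, h0 r]
    · rw [colY, YYg, h1 r]
    · rw [colZ, Zg, h0 r, h1 r, add_comm]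

/-- The linear map sending `U` to the corresponding matrix `S`. -/
def Lmap (K : Type*) [Field K] (m : ℕ) :
    (Fin m → K) →ₗ[K] Matrix (Fin (m + 2)) (Fin 2) K where
  toFun U := Matrix.of fun r c =>
    if (c:ℕ) = 0 then gfun U (r:ℕ) else (if 2 ≤ (r:ℕ) then gfun U ((r:ℕ) - 2) else 0)
  map_add' U V := by
    ext r c
    simp only [Matrix.of_apply, Matrix.add_apply, gfun]
    split_ifs <;> simp
  map_smul' a U := by
    ext r c
    simp only [Matrix.of_apply, Matrix.smul_apply, RingHom.id_apply, gfun, smul_eq_mul]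
    split_ifs <;> simp

end Stmt4Aux

theorem stmt4 (K : Type*) [Field K] (m : ℕ) :
    (∀ S : Matrix (Fin (m + 2)) (Fin 2) K,
      cond4 K m S ↔
        ∃ U : Fin m → K,
          (∀ (j : ℕ) (h : j < m), S ⟨j, by omega⟩ 0 = U ⟨j, h⟩) ∧
          S ⟨m, by omega⟩ 0 = 0 ∧ S ⟨m + 1, by omega⟩ 0 = 0 ∧
          S 0 1 = 0 ∧ S 1 1 = 0 ∧
          ∀ (j : ℕ) (h1 : 2 ≤ j) (h2 : j < m + 2),
            S ⟨j, h2⟩ 1 = U ⟨j - 2, by omega⟩) ∧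
    ∃ W : Submodule K (Matrix (Fin (m + 2)) (Fin 2) K),
      (∀ S, S ∈ W ↔ cond4 K m S) ∧ Module.finrank K W = m := by
  -- the entrywise characterization, in a convenient uniform form
  have charg : ∀ (S : Matrix (Fin (m + 2)) (Fin 2) K) (U : Fin m → K),
      ((∀ r : Fin (m+2), S r 0 = gfun U (r:ℕ)) ∧
       (∀ r : Fin (m+2), S r 1 = if 2 ≤ (r:ℕ) then gfun U ((r:ℕ) - 2) else 0)) ↔
      ((∀ (j : ℕ) (h : j < m), S ⟨j, by omega⟩ 0 = U ⟨j, h⟩) ∧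
        S ⟨m, by omega⟩ 0 = 0 ∧ S ⟨m + 1, by omega⟩ 0 = 0 ∧
        S 0 1 = 0 ∧ S 1 1 = 0 ∧
        ∀ (j : ℕ) (h1 : 2 ≤ j) (h2 : j < m + 2),
          S ⟨j, h2⟩ 1 = U ⟨j - 2, by omega⟩) := by
    intro S U
    constructor
    · rintro ⟨h0, h1⟩
      refine ⟨fun j h => ?_, ?_, ?_, ?_, ?_, fun j h1' h2 => ?_⟩
      · rw [h0 ⟨j, by omega⟩, gfun_pos U (show ((⟨j, by omega⟩ : Fin (m+2)):ℕ) < m from h)]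
      · rw [h0 ⟨m, by omega⟩, gfun_neg U (by simp)]
      · rw [h0 ⟨m+1, by omega⟩, gfun_neg U (by simp)]
      · rw [h1 0, if_neg (by simp)]
      · rw [h1 1, if_neg (show ¬ 2 ≤ ((1 : Fin (m+2)) : ℕ) by rw [Fin.val_one]; omega)]
      · rw [h1 ⟨j, h2⟩, if_pos (show 2 ≤ ((⟨j, h2⟩ : Fin (m+2)):ℕ) from h1'),
          gfun_pos U (show j - 2 < m by omega)]
    · rintro ⟨h0, hm, hm1, s0, s1, h1⟩
      constructor
      · intro r
        by_cases h : (r:ℕ) < m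
        · rw [gfun_pos U h, ← h0 r h]
        · rw [gfun_neg U h]
          have : (r:ℕ) = m ∨ (r:ℕ) = m + 1 := by omega
          rcases this with h' | h'
          · have : r = ⟨m, by omega⟩ := Fin.ext h'
            rw [this]; exact hm
          · have : r = ⟨m+1, by omega⟩ := Fin.ext h'
            rw [this]; exact hm1
      · intro r
        by_cases h : 2 ≤ (r:ℕ)
        · rw [if_pos h, gfun_pos U (show (r:ℕ) - 2 < m by omega), ← h1 r h r.isLt]
        · rw [if_neg h]
          have : (r:ℕ) = 0 ∨ (r:ℕ) = 1 := by omega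
          rcases this with h' | h'
          · have : r = 0 := by
              apply Fin.ext; rw [Fin.val_zero]; exact h'
            rw [this]; exact s0
          · have : r = 1 := by
              apply Fin.ext; rw [Fin.val_one]; exact h'
            rw [this]; exact s1
  have hiff : ∀ S : Matrix (Fin (m + 2)) (Fin 2) K,
      cond4 K m S ↔
        ∃ U : Fin m → K,
          (∀ (j : ℕ) (h : j < m), S ⟨j, by omega⟩ 0 = U ⟨j, h⟩) ∧
          S ⟨m, by omega⟩ 0 = 0 ∧ S ⟨m + 1, by omega⟩ 0 = 0 ∧
          S 0 1 = 0 ∧ S 1 1 = 0 ∧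
          ∀ (j : ℕ) (h1 : 2 ≤ j) (h2 : j < m + 2),
            S ⟨j, h2⟩ 1 = U ⟨j - 2, by omega⟩ := by
    intro S
    unfold cond4
    exact exists_congr fun U => (char1 S U).trans (charg S U)
  refine ⟨hiff, LinearMap.range (Lmap K m), fun S => ?_, ?_⟩
  · rw [LinearMap.mem_range]
    unfold cond4
    refine exists_congr fun U => (?_ : _ ↔ _).trans (char1 S U).symm
    constructor
    · rintro rfl
      constructor
      · intro r; simp [Lmap, gfun]
      · intro r; simp [Lmap, gfun]
    · rintro ⟨h0, h1⟩
      ext r c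
      fin_cases c
      · simpa [Lmap] using (h0 r).symm
      · simpa [Lmap] using (h1 r).symm
  · have hinj : Function.Injective (Lmap K m) := by
      intro U V h
      funext j
      have h2 := congrFun (congrFun h ⟨(j:ℕ), by omega⟩) 0
      simp only [Lmap, LinearMap.coe_mk, AddHom.coe_mk, Matrix.of_apply, Fin.val_zero,
        if_pos, gfun, Fin.is_lt, Fin.eta] at h2
      simpa [gfun, j.isLt] using h2
    rw [LinearMap.finrank_range_of_inj hinj]
    simp
end

section
/- Let m ≥ 0. The linear map K^{m+1} → K^{m+3} given by the matrix Z^{m+1}_{m+3} is injective; in particular its image is an (m+1)-dimensional subspace of K^{m+3}. -/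
/-- The matrix `Z^{m+1}_{m+3}` (the `m`-th enlargement of the column `[1;1;1]`),
determined by `(Zr)_1 = r_1 + r_2`, `(Zr)_2 = r_1 + r_3` and
`(Zr)_i = r_{i-2} + r_{i+1}` for `3 ≤ i ≤ m+3` (1-based, `r_j = 0` for `j > m+1`). -/
def Zmat3 (K : Type*) [Field K] (m : ℕ) : Matrix (Fin (m + 3)) (Fin (m + 1)) K :=
  Matrix.of fun r c =>
    if (r : ℕ) = 0 then (if (c : ℕ) = 0 ∨ (c : ℕ) = 1 then 1 else 0)
    else if (r : ℕ) = 1 then (if (c : ℕ) = 0 ∨ (c : ℕ) = 2 then 1 else 0)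
    else (if (c : ℕ) + 2 = (r : ℕ) ∨ (c : ℕ) = (r : ℕ) + 1 then 1 else 0)

lemma Zmat3_sum_ite {K : Type*} [Field K] {n : ℕ} (v : Fin n → K) (j : ℕ) :
    (∑ c : Fin n, if (c : ℕ) = j then v c else 0) =
      if h : j < n then v ⟨j, h⟩ else 0 := by
  split_ifs with h
  · rw [Finset.sum_eq_single (⟨j, h⟩ : Fin n)]
    · simp
    · intro b _ hb
      rw [if_neg]
      intro hbj
      exact hb (Fin.ext hbj)
    · simp
  · apply Finset.sum_eq_zero
    intro c _
    rw [if_neg]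
    intro hc
    exact h (hc ▸ c.isLt)

lemma Zmat3_row {K : Type*} [Field K] (m j : ℕ) (hr : j + 2 < m + 3) (c : Fin (m + 1)) :
    Zmat3 K m ⟨j + 2, hr⟩ c =
      (if (c : ℕ) = j then 1 else 0) + (if (c : ℕ) = j + 3 then 1 else 0) := by
  simp only [Zmat3, Matrix.of_apply]
  rw [if_neg (by omega : ¬(j + 2 = 0)), if_neg (by omega : ¬(j + 2 = 1))]
  by_cases hc1 : (c : ℕ) = j
  · have h2 : ¬((c : ℕ) = j + 3) := by omega
    have hL : (c : ℕ) + 2 = j + 2 ∨ (c : ℕ) = j + 2 + 1 := Or.inl (by omega)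
    rw [if_pos hL, if_pos hc1, if_neg h2, add_zero]
  · by_cases hc2 : (c : ℕ) = j + 3
    · have hL : (c : ℕ) + 2 = j + 2 ∨ (c : ℕ) = j + 2 + 1 := Or.inr (by omega)
      rw [if_pos hL, if_neg hc1, if_pos hc2, zero_add]
    · have hL : ¬((c : ℕ) + 2 = j + 2 ∨ (c : ℕ) = j + 2 + 1) := by omega
      rw [if_neg hL, if_neg hc1, if_neg hc2, add_zero]

theorem stmt12 (K : Type*) [Field K] (m : ℕ) :
    Function.Injective (Zmat3 K m).mulVecLin ∧
    Module.finrank K (LinearMap.range (Zmat3 K m).mulVecLin) = m + 1 := by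
  have hinj : Function.Injective (Zmat3 K m).mulVecLin := by
    rw [← LinearMap.ker_eq_bot, LinearMap.ker_eq_bot']
    intro v hv
    have key : ∀ d j : ℕ, m + 1 ≤ j + d → ∀ hj : j < m + 1, v ⟨j, hj⟩ = 0 := by
      intro d
      induction d with
      | zero => intro j h hj; omega
      | succ d ih =>
        intro j h hj
        have hr : j + 2 < m + 3 := by omega
        have hrow : (Zmat3 K m).mulVecLin v ⟨j + 2, hr⟩ = 0 := by rw [hv]; rfl
        rw [Matrix.mulVecLin_apply, Matrix.mulVec, dotProduct] at hrow
        simp only [Zmat3_row m j hr] at hrow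
        have hsum : ∀ c : Fin (m + 1),
            ((if (c : ℕ) = j then (1:K) else 0) + (if (c : ℕ) = j + 3 then 1 else 0)) * v c =
            (if (c : ℕ) = j then v c else 0) + (if (c : ℕ) = j + 3 then v c else 0) := by
          intro c; split_ifs <;> ring
        rw [Finset.sum_congr rfl (fun c _ => hsum c), Finset.sum_add_distrib,
          Zmat3_sum_ite, Zmat3_sum_ite] at hrow
        rw [dif_pos hj] at hrow
        by_cases h3 : j + 3 < m + 1
        · rw [dif_pos h3, ih (j + 3) (by omega) h3, add_zero] at hrow
          exact hrow
        · rw [dif_neg h3, add_zero] at hrow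
          exact hrow
    funext i
    rcases i with ⟨j, hj⟩
    exact key (m + 1) j (by omega) hj
  refine ⟨hinj, ?_⟩
  rw [LinearMap.finrank_range_of_inj hinj]
  simp
end

section
/- Let m ≥ 1 and let A, B, C, D be the matrices over K defined in the context (these are the structure matrices of the rank-1 preprojective representation ₍₂₎N^{(1)}_m of the extended Dynkin quiver D̃_n). Suppose f_1, f_2 ∈ M_{(m+1)×(m+1)}(K), g ∈ M_{(2m+1)×(2m+1)}(K), h_1 ∈ M_{(m+1)×(m+1)}(K) and h_2 ∈ M_{m×m}(K) satisfy f_1 A = A g, f_2 B = B g, g C = C h_1 and g D = D h_2. Then there is a scalar λ ∈ K with f_1 = λ I_{m+1}, f_2 = λ I_{m+1}, g = λ I_{2m+1}, h_1 = λ I_{m+1} and h_2 = λ I_m. In particular the representation ₍₂₎N^{(1)}_m is indecomposable with endomorphism ring K. -/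
/-- `A = [0 | I_{m+1}] ∈ M_{(m+1)×(2m+1)}` (an `(m+1)×m` zero block followed by `I_{m+1}`). -/
def A17 (K : Type*) [Field K] (m : ℕ) : Matrix (Fin (m + 1)) (Fin (2 * m + 1)) K :=
  Matrix.of fun i j => if (j : ℕ) = (i : ℕ) + m then 1 else 0

/-- `B ∈ M_{(m+1)×(2m+1)}`: first `m` columns `I_m` with one zero row appended below,
last `m+1` columns `I_{m+1}`. -/
def B17 (K : Type*) [Field K] (m : ℕ) : Matrix (Fin (m + 1)) (Fin (2 * m + 1)) K :=
  Matrix.of fun i j =>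
    if ((i : ℕ) = (j : ℕ) ∧ (j : ℕ) < m) ∨ (j : ℕ) = (i : ℕ) + m then 1 else 0

/-- `C ∈ M_{(2m+1)×(m+1)}`: top `m` rows zero, bottom `m+1` rows `I_{m+1}`. -/
def C17 (K : Type*) [Field K] (m : ℕ) : Matrix (Fin (2 * m + 1)) (Fin (m + 1)) K :=
  Matrix.of fun i j => if (i : ℕ) = (j : ℕ) + m then 1 else 0

/-- `D ∈ M_{(2m+1)×m}`: top `m` rows `I_m`, row `m+1` zero, bottom `m` rows `I_m`
(1-based indexing). -/
def D17 (K : Type*) [Field K] (m : ℕ) : Matrix (Fin (2 * m + 1)) (Fin m) K :=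
  Matrix.of fun i j => if (i : ℕ) = (j : ℕ) ∨ (i : ℕ) = (j : ℕ) + (m + 1) then 1 else 0

/-! Split the middle space as `K^m ⊕ K^(m+1)` and write `g` in blocks `[[P, X], [Y, Q]]`.
The relations for `A` and `C` (projection onto, and inclusion of, the second summand) give
`X = Y = 0` and `f₁ = h₁ = Q`. The relation for `B` gives `f₂ = Q`, identifies `P` with the
leading `m × m` corner of `Q` and kills the last row of `Q` off the diagonal; the relation for `D`
gives `h₂ = P`, identifies `P` with the trailing `m × m` corner of `Q` and kills the first row of
`Q` off the diagonal. So `Q` is a Toeplitz matrix whose first and last rows vanish off the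
diagonal, hence scalar, and then every component of the endomorphism is the same scalar. -/

theorem Matrix.eq_smul_one_of_toeplitz {R : Type*} [Semiring R] {n : ℕ}
    (Q : Matrix (Fin (n + 1)) (Fin (n + 1)) R)
    (shift : ∀ i j : Fin n, Q i.succ j.succ = Q i.castSucc j.castSucc)
    (first_row : ∀ j : Fin n, Q 0 j.succ = 0)
    (last_row : ∀ j : Fin n, Q (Fin.last n) j.castSucc = 0) :
    Q = Q 0 0 • 1 := by
  have diag (i) : Q i i = Q 0 0 := by
    induction i using Fin.induction with
    | zero => rfl
    | succ i ih => rw [shift, ih]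
  have above (i j) (hij : i < j) : Q i j = 0 := by
    induction i using Fin.induction generalizing j with
    | zero =>
      cases j using Fin.cases with
      | zero => exact (lt_irrefl _ hij).elim
      | succ j => exact first_row j
    | succ i ih =>
      cases j using Fin.cases with
      | zero => exact (Fin.not_lt_zero _ hij).elim
      | succ j =>
        rw [shift]
        exact ih _ (Fin.castSucc_lt_castSucc_iff.2 (Fin.succ_lt_succ_iff.1 hij))
  have below (i j) (hji : j < i) : Q i j = 0 := by
    induction i using Fin.reverseInduction generalizing j with
    | last =>
      cases j using Fin.lastCases with
      | last => exact (lt_irrefl _ hji).elim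
      | cast j => exact last_row j
    | cast i ih =>
      cases j using Fin.lastCases with
      | last => exact ((Fin.le_last _).not_gt hji).elim
      | cast j =>
        rw [← shift]
        exact ih _ (Fin.succ_lt_succ_iff.2 (Fin.castSucc_lt_castSucc_iff.1 hji))
  ext i j
  rcases lt_trichotomy i j with hij | rfl | hji
  · simp [above i j hij, hij.ne]
  · simp [diag]
  · simp [below i j hji, hji.ne']

namespace DTilde

variable {K : Type*} [Field K] {m : ℕ}

/-- Coordinates of the middle space `K^(2m+1) = K^m ⊕ K^(m+1)`: `upper m j` is the `j`-th
coordinate of the first summand, `lower m i` the `i`-th coordinate of the second. -/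
def upper (m : ℕ) (j : Fin m) : Fin (2 * m + 1) := ⟨j, by omega⟩

def lower (m : ℕ) (i : Fin (m + 1)) : Fin (2 * m + 1) := ⟨i + m, by omega⟩

@[simp] theorem upper_inj {i j : Fin m} : upper m i = upper m j ↔ i = j := by
  simp [upper, Fin.ext_iff]

@[simp] theorem lower_inj {i j : Fin (m + 1)} : lower m i = lower m j ↔ i = j := by
  simp [lower, Fin.ext_iff]

@[simp] theorem upper_ne_lower (i : Fin m) (j : Fin (m + 1)) : upper m i ≠ lower m j := by
  simp [upper, lower, Fin.ext_iff]; omega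

@[simp] theorem lower_ne_upper (i : Fin (m + 1)) (j : Fin m) : lower m i ≠ upper m j :=
  (upper_ne_lower j i).symm

theorem upper_or_lower (k : Fin (2 * m + 1)) : (∃ j, upper m j = k) ∨ ∃ i, lower m i = k := by
  by_cases hk : (k : ℕ) < m
  · exact Or.inl ⟨⟨k, hk⟩, rfl⟩
  · exact Or.inr ⟨⟨k - m, by omega⟩, Fin.ext (by simp [lower]; omega)⟩

theorem eq_smul_one_of_blocks {R : Type*} [Semiring R]
    (g : Matrix (Fin (2 * m + 1)) (Fin (2 * m + 1)) R) (c : R)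
    (upper_upper : g.submatrix (upper m) (upper m) = c • 1)
    (upper_lower : ∀ i j, g (upper m i) (lower m j) = 0)
    (lower_upper : ∀ i j, g (lower m i) (upper m j) = 0)
    (lower_lower : g.submatrix (lower m) (lower m) = c • 1) : g = c • 1 := by
  ext k l
  rcases upper_or_lower k with ⟨i, rfl⟩ | ⟨i, rfl⟩ <;>
    rcases upper_or_lower l with ⟨j, rfl⟩ | ⟨j, rfl⟩
  · simpa [Matrix.one_apply] using congr_fun₂ upper_upper i j
  · simp [upper_lower]
  · simp [lower_upper]
  · simpa [Matrix.one_apply] using congr_fun₂ lower_lower i j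

theorem A17_apply (i : Fin (m + 1)) (k : Fin (2 * m + 1)) :
    A17 K m i k = if lower m i = k then 1 else 0 := by
  simp [A17, lower, Fin.ext_iff, eq_comm]

theorem C17_apply (k : Fin (2 * m + 1)) (j : Fin (m + 1)) :
    C17 K m k j = if k = lower m j then 1 else 0 := by
  simp [C17, lower, Fin.ext_iff]

theorem D17_apply (k : Fin (2 * m + 1)) (j : Fin m) :
    D17 K m k j = (if k = upper m j then 1 else 0) + if k = lower m j.succ then 1 else 0 := by
  simp only [D17, Matrix.of_apply, upper, lower, Fin.ext_iff, Fin.val_succ]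
  split_ifs <;> (try simp) <;> omega

theorem B17_apply_upper (i : Fin (m + 1)) (j : Fin m) :
    B17 K m i (upper m j) = if i = j.castSucc then 1 else 0 := by
  simp only [B17, Matrix.of_apply, upper, Fin.ext_iff, Fin.val_castSucc]
  split_ifs <;> first | rfl | omega

theorem B17_apply_lower (i j : Fin (m + 1)) :
    B17 K m i (lower m j) = if i = j then 1 else 0 := by
  simp only [B17, Matrix.of_apply, lower, Fin.ext_iff]
  split_ifs <;> first | rfl | omega

theorem B17_castSucc_apply (i : Fin m) (k : Fin (2 * m + 1)) :
    B17 K m i.castSucc k =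
      (if upper m i = k then 1 else 0) + if lower m i.castSucc = k then 1 else 0 := by
  simp only [B17, Matrix.of_apply, upper, lower, Fin.ext_iff, Fin.val_castSucc]
  split_ifs <;> (try simp) <;> omega

theorem B17_last_apply (k : Fin (2 * m + 1)) :
    B17 K m (Fin.last m) k = if lower m (Fin.last m) = k then 1 else 0 := by
  simp only [B17, Matrix.of_apply, lower, Fin.ext_iff, Fin.val_last]
  split_ifs <;> first | rfl | omega

variable {ι : Type*}

@[simp] theorem A17_mul_apply (g : Matrix (Fin (2 * m + 1)) ι K) (i j) :
    (A17 K m * g) i j = g (lower m i) j := by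
  simp [Matrix.mul_apply, A17_apply]

@[simp] theorem mul_A17_apply_lower (f : Matrix ι (Fin (m + 1)) K) (i j) :
    (f * A17 K m) i (lower m j) = f i j := by
  simp [Matrix.mul_apply, A17_apply]

@[simp] theorem mul_A17_apply_upper (f : Matrix ι (Fin (m + 1)) K) (i j) :
    (f * A17 K m) i (upper m j) = 0 := by
  simp [Matrix.mul_apply, A17_apply]

@[simp] theorem mul_C17_apply (g : Matrix ι (Fin (2 * m + 1)) K) (i j) :
    (g * C17 K m) i j = g i (lower m j) := by
  simp [Matrix.mul_apply, C17_apply]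

@[simp] theorem C17_mul_apply_lower (h : Matrix (Fin (m + 1)) ι K) (i j) :
    (C17 K m * h) (lower m i) j = h i j := by
  simp [Matrix.mul_apply, C17_apply]

@[simp] theorem C17_mul_apply_upper (h : Matrix (Fin (m + 1)) ι K) (i j) :
    (C17 K m * h) (upper m i) j = 0 := by
  simp [Matrix.mul_apply, C17_apply]

@[simp] theorem mul_D17_apply (g : Matrix ι (Fin (2 * m + 1)) K) (i j) :
    (g * D17 K m) i j = g i (upper m j) + g i (lower m j.succ) := by
  simp [Matrix.mul_apply, D17_apply, mul_add, Finset.sum_add_distrib]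

@[simp] theorem D17_mul_apply_upper (h : Matrix (Fin m) ι K) (i j) :
    (D17 K m * h) (upper m i) j = h i j := by
  simp [Matrix.mul_apply, D17_apply]

@[simp] theorem D17_mul_apply_lower_zero (h : Matrix (Fin m) ι K) (j) :
    (D17 K m * h) (lower m 0) j = 0 := by
  simp [Matrix.mul_apply, D17_apply, eq_comm (a := (0 : Fin (m + 1)))]

@[simp] theorem D17_mul_apply_lower_succ (h : Matrix (Fin m) ι K) (i j) :
    (D17 K m * h) (lower m i.succ) j = h i j := by
  simp [Matrix.mul_apply, D17_apply]

@[simp] theorem mul_B17_apply_upper (f : Matrix ι (Fin (m + 1)) K) (i j) :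
    (f * B17 K m) i (upper m j) = f i j.castSucc := by
  simp [Matrix.mul_apply, B17_apply_upper]

@[simp] theorem mul_B17_apply_lower (f : Matrix ι (Fin (m + 1)) K) (i j) :
    (f * B17 K m) i (lower m j) = f i j := by
  simp [Matrix.mul_apply, B17_apply_lower]

@[simp] theorem B17_mul_apply_castSucc (g : Matrix (Fin (2 * m + 1)) ι K) (i j) :
    (B17 K m * g) i.castSucc j = g (upper m i) j + g (lower m i.castSucc) j := by
  simp [Matrix.mul_apply, B17_castSucc_apply, add_mul, Finset.sum_add_distrib]

@[simp] theorem B17_mul_apply_last (g : Matrix (Fin (2 * m + 1)) ι K) (j) :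
    (B17 K m * g) (Fin.last m) j = g (lower m (Fin.last m)) j := by
  simp [Matrix.mul_apply, B17_last_apply]

end DTilde

open DTilde

theorem stmt17_general (K : Type*) [Field K] (m : ℕ)
    (f1 f2 : Matrix (Fin (m + 1)) (Fin (m + 1)) K)
    (g : Matrix (Fin (2 * m + 1)) (Fin (2 * m + 1)) K)
    (h1 : Matrix (Fin (m + 1)) (Fin (m + 1)) K)
    (h2 : Matrix (Fin m) (Fin m) K)
    (hA : f1 * A17 K m = A17 K m * g)
    (hB : f2 * B17 K m = B17 K m * g)
    (hC : g * C17 K m = C17 K m * h1)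
    (hD : g * D17 K m = D17 K m * h2) :
    ∃ lam : K,
      f1 = lam • 1 ∧ f2 = lam • 1 ∧ g = lam • 1 ∧ h1 = lam • 1 ∧ h2 = lam • 1 := by
  set Q := g.submatrix (lower m) (lower m)
  have hLU (i j) : g (lower m i) (upper m j) = 0 := by
    simpa using (congr_fun₂ hA i (upper m j)).symm
  have hUL (i j) : g (upper m i) (lower m j) = 0 := by
    simpa using congr_fun₂ hC (upper m i) j
  have hf1 : f1 = Q := by
    ext i j; simpa [Q] using congr_fun₂ hA i (lower m j)
  have hh1 : h1 = Q := by
    ext i j; simpa [Q] using (congr_fun₂ hC (lower m i) j).symm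
  have hf2 : f2 = Q := by
    ext i j
    induction i using Fin.lastCases with
    | last => simpa [Q] using congr_fun₂ hB (Fin.last m) (lower m j)
    | cast i => simpa [Q, hUL] using congr_fun₂ hB i.castSucc (lower m j)
  have hh2 : h2 = g.submatrix (upper m) (upper m) := by
    ext i j; simpa [hUL] using (congr_fun₂ hD (upper m i) j).symm
  have hPQ (i j) : g (upper m i) (upper m j) = Q i.castSucc j.castSucc := by
    simpa [hLU, hf2] using (congr_fun₂ hB i.castSucc (upper m j)).symm
  obtain ⟨c, hQ⟩ : ∃ c, Q = c • 1 := by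
    refine ⟨_, Matrix.eq_smul_one_of_toeplitz Q (fun i j => ?_) (fun j => ?_) (fun j => ?_)⟩
    · simpa [Q, hLU, hh2, hPQ] using congr_fun₂ hD (lower m i.succ) j
    · simpa [Q, hLU] using congr_fun₂ hD (lower m 0) j
    · simpa [hLU, hf2] using congr_fun₂ hB (Fin.last m) (upper m j)
  have hP : g.submatrix (upper m) (upper m) = c • 1 := by
    ext i j; simp [hPQ, hQ, Matrix.one_apply]
  exact ⟨c, hf1 ▸ hQ, hf2 ▸ hQ, eq_smul_one_of_blocks g c hP hUL hLU hQ, hh1 ▸ hQ,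
    hh2 ▸ hP⟩

/-- every endomorphism of the representation `₍₂₎N^{(1)}_m` of `D̃_n` is
scalar; in particular the representation is indecomposable with endomorphism ring `K`. -/
theorem stmt17 (K : Type*) [Field K] (m : ℕ) (hm : 1 ≤ m)
    (f1 f2 : Matrix (Fin (m + 1)) (Fin (m + 1)) K)
    (g : Matrix (Fin (2 * m + 1)) (Fin (2 * m + 1)) K)
    (h1 : Matrix (Fin (m + 1)) (Fin (m + 1)) K)
    (h2 : Matrix (Fin m) (Fin m) K)
    (hA : f1 * A17 K m = A17 K m * g)
    (hB : f2 * B17 K m = B17 K m * g)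
    (hC : g * C17 K m = C17 K m * h1)
    (hD : g * D17 K m = D17 K m * h2) :
    ∃ lam : K,
      f1 = lam • 1 ∧ f2 = lam • 1 ∧ g = lam • 1 ∧ h1 = lam • 1 ∧ h2 = lam • 1 :=
  stmt17_general K m f1 f2 g h1 h2 hA hB hC hD
end
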